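/- arXiv:1407.0988 — 4 statements merged into one kernel-verified Lean document; each statement's English description precedes it below -/
import Mathlib

section
/- Let n ≥ 1, let u : ℝⁿ → ℝ be twice continuously differentiable, and let α : ℝⁿ → ℝ be continuous with α ≥ 0. If Δu(x) = α(x)·u(x) for all x ∈ ℝⁿ (Δ the Euclidean Laplacian) and u(x) → 0 as ‖x‖ → ∞, then u ≡ 0. In other words, the operator Δ − α has trivial kernel among C² functions decaying at infinity. -/
open Filter

/-- The flat Euclidean Laplacian `Δu = Σ_{i=1}^{n} ∂²u/∂x_i²` on `ℝⁿ`. -/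
noncomputable def euclideanLaplacian (n : ℕ) (u : EuclideanSpace ℝ (Fin n) → ℝ)
    (x : EuclideanSpace ℝ (Fin n)) : ℝ :=
  ∑ i : Fin n,
    iteratedFDeriv ℝ 2 u x ![EuclideanSpace.single i 1, EuclideanSpace.single i 1]

/-!
If `u` had a positive value `u x₀`, then for small `ε > 0` the function `u + ε‖·‖²` would
still attain its maximum over a large ball at an interior point `p` with `u p > 0`, because `u`
is small near the boundary sphere. There `Δ(u + ε‖·‖²) ≤ 0`, i.e. `Δu(p) ≤ -2nε < 0`,
whereas `Δu(p) = α(p) u(p) ≥ 0`. Hence `u ≤ 0`, and applied to `-u`, `u ≥ 0`.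
-/

open Set Metric Laplacian InnerProductSpace
open scoped Topology RealInnerProductSpace

/-- A positive second derivative would make `x₀` a local minimum too, so `f` would be locally
constant and its second derivative would vanish. -/
theorem IsLocalMax.deriv_deriv_nonpos {f : ℝ → ℝ} {x₀ : ℝ} (h : IsLocalMax f x₀)
    (hc : ContinuousAt f x₀) : deriv (deriv f) x₀ ≤ 0 := by
  by_contra! hpos
  have hmin : IsLocalMin f x₀ := isLocalMin_of_deriv_deriv_pos hpos h.deriv_eq_zero hc
  have hconst : f =ᶠ[𝓝 x₀] fun _ => f x₀ := by
    filter_upwards [h, hmin] with x hmax hmin using le_antisymm hmax hmin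
  have hderiv : deriv f =ᶠ[𝓝 x₀] fun _ => 0 := by simpa using hconst.deriv
  simp [hderiv.deriv_eq] at hpos

section InnerProductSpace

variable {E : Type*} [NormedAddCommGroup E] [InnerProductSpace ℝ E]

theorem IsLocalMax.iteratedFDeriv_two_nonpos {f : E → ℝ} {p : E} (h : IsLocalMax f p)
    (hf : ContDiff ℝ 2 f) (v : E) : iteratedFDeriv ℝ 2 f p ![v, v] ≤ 0 := by
  set g := fun t : ℝ => f (p + t • v)
  have hline : ∀ t : ℝ, HasDerivAt (fun s : ℝ => p + s • v) v t := fun t => by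
    simpa using ((hasDerivAt_id t).smul_const v).const_add p
  have hg' : deriv g = fun t => fderiv ℝ f (p + t • v) v := by
    ext t
    exact (((hf.differentiable two_ne_zero) _).hasFDerivAt.comp_hasDerivAt t (hline t)).deriv
  have hg'' :
      HasDerivAt (fun t : ℝ => fderiv ℝ f (p + t • v) v) (fderiv ℝ (fderiv ℝ f) p v v) 0 := by
    have hDf : DifferentiableAt ℝ (fderiv ℝ f) p :=
      (hf.fderiv_right le_rfl).differentiable one_ne_zero p
    exact ((ContinuousLinearMap.apply ℝ ℝ v).hasFDerivAt.comp p hDf.hasFDerivAt)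
      |>.comp_hasDerivAt_of_eq 0 (hline 0) (by simp)
  have hmax : IsLocalMax g 0 :=
    IsLocalMax.comp_continuous (g := fun t : ℝ => p + t • v) (by simpa using h)
      (hline 0).continuousAt
  calc iteratedFDeriv ℝ 2 f p ![v, v] = deriv (deriv g) 0 := by
        rw [hg', hg''.deriv, iteratedFDeriv_two_apply]; simp
    _ ≤ 0 := hmax.deriv_deriv_nonpos (hf.continuous.continuousAt.comp (hline 0).continuousAt)

variable [FiniteDimensional ℝ E]

theorem IsLocalMax.laplacian_nonpos {f : E → ℝ} {p : E} (h : IsLocalMax f p)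
    (hf : ContDiff ℝ 2 f) : Δ f p ≤ 0 := by
  rw [laplacian_eq_iteratedFDeriv_stdOrthonormalBasis]
  exact Finset.sum_nonpos fun i _ => h.iteratedFDeriv_two_nonpos hf _

theorem laplacian_norm_sq (x : E) : Δ (fun y : E => ‖y‖ ^ 2) x = 2 * Module.finrank ℝ E := by
  have hD2 : fderiv ℝ (fderiv ℝ fun y : E => ‖y‖ ^ 2) x = 2 • innerSL ℝ := by
    rw [fderiv_norm_sq]
    exact (2 • innerSL ℝ (E := E)).fderiv
  simp [laplacian_eq_iteratedFDeriv_stdOrthonormalBasis, iteratedFDeriv_two_apply, hD2,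
    ← Finset.mul_sum]
  change ∑ i, ⟪stdOrthonormalBasis ℝ E i, stdOrthonormalBasis ℝ E i⟫ = _
  simp

end InnerProductSpace

theorem exists_pos_isLocalMax_add_mul_norm_sq {F : Type*} [NormedAddCommGroup F] [ProperSpace F]
    {u : F → ℝ} (hu : Continuous u) (hdecay : Tendsto u (comap norm atTop) (𝓝 0)) {x₀ : F}
    (hx₀ : 0 < u x₀) : ∃ ε > 0, ∃ p, 0 < u p ∧ IsLocalMax (fun x => u x + ε * ‖x‖ ^ 2) p := by
  obtain ⟨R₀, hR₀⟩ := eventually_atTop.mp <| eventually_comap.mp <|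
    hdecay.eventually (gt_mem_nhds (half_pos hx₀))
  set R := max R₀ (‖x₀‖ + 1)
  have hx₀R : ‖x₀‖ < R := (lt_add_one _).trans_le (le_max_right _ _)
  have hR : 0 < R := (norm_nonneg x₀).trans_lt hx₀R
  -- `ε R² = u x₀ / 4` is too small for the maximum to be reached where `u < u x₀ / 2`.
  set ε := u x₀ / (4 * R ^ 2)
  have hεR : ε * R ^ 2 = u x₀ / 4 := by simp only [ε]; field_simp
  set G := fun x : F => u x + ε * ‖x‖ ^ 2
  obtain ⟨p, hpR, hpmax⟩ := (isCompact_closedBall (0 : F) R).exists_isMaxOn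
    ⟨x₀, mem_closedBall_zero_iff.mpr hx₀R.le⟩ (by fun_prop : Continuous G).continuousOn
  rw [mem_closedBall_zero_iff] at hpR
  have hGp : u x₀ ≤ G p := calc
    u x₀ ≤ G x₀ := le_add_of_nonneg_right (by positivity)
    _ ≤ G p := hpmax (mem_closedBall_zero_iff.mpr hx₀R.le)
  have hεp : ε * ‖p‖ ^ 2 ≤ u x₀ / 4 := hεR ▸ by gcongr
  have hpR' : ‖p‖ < R := by
    refine hpR.lt_of_ne fun hpR => ?_
    have := hR₀ ‖p‖ (hpR ▸ le_max_left _ _) p rfl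
    linarith
  refine ⟨ε, by positivity, p, by linarith, hpmax.isLocalMax ?_⟩
  exact mem_of_superset (isOpen_ball.mem_nhds (mem_ball_zero_iff.mpr hpR')) ball_subset_closedBall

theorem nonpos_of_tendsto_zero_of_laplacian_nonneg {E : Type*} [NormedAddCommGroup E]
    [InnerProductSpace ℝ E] [FiniteDimensional ℝ E] [Nontrivial E]
    {u : E → ℝ} (hu : ContDiff ℝ 2 u) (hdecay : Tendsto u (comap norm atTop) (𝓝 0))
    (hΔ : ∀ x, 0 < u x → 0 ≤ Δ u x) (x : E) : u x ≤ 0 := by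
  by_contra! hx
  obtain ⟨ε, hε, p, hup, hmax⟩ := exists_pos_isLocalMax_add_mul_norm_sq hu.continuous hdecay hx
  have hq : ContDiff ℝ 2 fun y : E => ‖y‖ ^ 2 := contDiff_norm_sq ℝ
  have hεq : ContDiff ℝ 2 (ε • fun y : E => ‖y‖ ^ 2) := hq.const_smul ε
  have hΔmax : Δ (u + ε • fun y : E => ‖y‖ ^ 2) p ≤ 0 := hmax.laplacian_nonpos (hu.add hεq)
  rw [hu.contDiffAt.laplacian_add hεq.contDiffAt, laplacian_smul ε hq.contDiffAt,
    laplacian_norm_sq, smul_eq_mul] at hΔmax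
  have hdim : (0 : ℝ) < Module.finrank ℝ E := Nat.cast_pos.mpr Module.finrank_pos
  linarith [hΔ p hup, mul_pos hε (mul_pos two_pos hdim)]

theorem euclideanLaplacian_eq_laplacian (n : ℕ) (u : EuclideanSpace ℝ (Fin n) → ℝ) :
    euclideanLaplacian n u = Δ u := by
  ext x
  simp [euclideanLaplacian,
    laplacian_eq_iteratedFDeriv_orthonormalBasis u (EuclideanSpace.basisFun (Fin n) ℝ)]

theorem kernel_trivial_general (n : ℕ) (hn : 1 ≤ n)
    (u : EuclideanSpace ℝ (Fin n) → ℝ) (hu : ContDiff ℝ 2 u)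
    (α : EuclideanSpace ℝ (Fin n) → ℝ) (hα0 : ∀ x, 0 ≤ α x)
    (heq : ∀ x, euclideanLaplacian n u x = α x * u x)
    (hdecay : Tendsto u (comap (fun x : EuclideanSpace ℝ (Fin n) => ‖x‖) atTop) (nhds 0)) :
    ∀ x, u x = 0 := by
  have : Nonempty (Fin n) := ⟨⟨0, hn⟩⟩
  rw [euclideanLaplacian_eq_laplacian] at heq
  have nonpos : ∀ v : EuclideanSpace ℝ (Fin n) → ℝ, ContDiff ℝ 2 v →
      Tendsto v (comap norm atTop) (𝓝 0) → (∀ x, Δ v x = α x * v x) → ∀ x, v x ≤ 0 :=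
    fun v hv hvdecay hveq => nonpos_of_tendsto_zero_of_laplacian_nonneg hv hvdecay
      fun x hx => hveq x ▸ mul_nonneg (hα0 x) hx.le
  have hneg : ∀ x, Δ (-u) x = α x * (-u) x := fun x => by simp [laplacian_neg, heq]
  intro x
  have hle := nonpos u hu hdecay heq x
  have hge := nonpos (-u) hu.neg (by simpa [Pi.neg_def] using hdecay.neg) hneg x
  rw [Pi.neg_apply, neg_nonpos] at hge
  exact le_antisymm hle hge

/-- Triviality of the kernel of `Δ − α` for continuous `α ≥ 0`:
if `u ∈ C²(ℝⁿ)` satisfies `Δu = α·u` everywhere and `u(x) → 0` as `‖x‖ → ∞`,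
then `u ≡ 0`. -/
theorem kernel_trivial (n : ℕ) (hn : 1 ≤ n)
    (u : EuclideanSpace ℝ (Fin n) → ℝ) (hu : ContDiff ℝ 2 u)
    (α : EuclideanSpace ℝ (Fin n) → ℝ) (hα : Continuous α) (hα0 : ∀ x, 0 ≤ α x)
    (heq : ∀ x, euclideanLaplacian n u x = α x * u x)
    (hdecay : Tendsto u (comap (fun x : EuclideanSpace ℝ (Fin n) => ‖x‖) atTop) (nhds 0)) :
    ∀ x, u x = 0 :=
  kernel_trivial_general n hn u hu α hα0 heq hdecay
end

section
/- There exists a constant C > 0 such that for every twice continuously differentiable function v : ℝ⁴ \ {0} → ℝ and every measurable function w : ℝ⁴ \ {0} → ℝ, one has ( ∫_{ℝ⁴\{0}} |w(x)·v(x)|³ ‖x‖² dx )^{1/3} ≤ C · [ Σ_{j=0}^{2} ( ∫_{ℝ⁴\{0}} ‖D^j v(y)‖³ ‖y‖^{3j-1} dy )^{1/3} ] · ( ∫_{ℝ⁴\{0}} |w(y)|³ ‖y‖^{-1} dy )^{1/3}, with the inequality interpreted as trivially true when the right-hand side is infinite. -/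
/-!
Fix `x ≠ 0` and `ρ = ‖x‖ / 2`, so that `ρ ≤ ‖y‖ ≤ 3ρ` on `B = closedBall x ρ ⊆ ℝ⁴ \ {0}`.
Averaging the second-order Taylor formula of `v` from `y` to `x` over `y ∈ B` and applying
Hölder's inequality bounds `|v x| vol(B)^{1/3}` by the local `L³` norms of `v`, `ρ Dv` and
`ρ² D²v`. In the remainder term, `y ↦ y + t (x - y)` is a homothety of ratio `1 - t` centred
at `x`, which costs a factor `(1 - t)^{-4/3}`; against the weight `1 - t` of the remainder this
is integrable in `t`. Comparing `ρ` with `‖y‖` turns the local norms into the weighted ones, so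
`|v x| ‖x‖ ≤ K ‖v‖_{W'^{2,3}_{-1}}`, and the estimate follows by integrating
`|w x|³ ‖x‖⁻¹ (|v x| ‖x‖)³`.
-/

open MeasureTheory Metric Set Module
open scoped ENNReal

theorem setLIntegral_le_rpow_mul_measure_rpow {α : Type*} [MeasurableSpace α]
    {μ : Measure α} {s : Set α} {f : α → ℝ≥0∞} {p : ℝ} (hp : 1 ≤ p)
    (hf : AEMeasurable f (μ.restrict s)) :
    ∫⁻ a in s, f a ∂μ ≤ (∫⁻ a in s, f a ^ p ∂μ) ^ (1 / p) * μ s ^ (1 - 1 / p) := by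
  simpa [eLpNorm'] using
    eLpNorm'_le_eLpNorm'_mul_rpow_measure_univ one_pos hp hf.aestronglyMeasurable

theorem lintegral_one_sub_rpow_lt_top {r : ℝ} (hr : -1 < r) :
    ∫⁻ t in Ioc (0 : ℝ) 1, ENNReal.ofReal ((1 - t) ^ r) < ⊤ := by
  have h : IntervalIntegrable (fun t : ℝ => (1 - t) ^ r) volume 0 1 := by
    simpa using
      ((intervalIntegral.intervalIntegrable_rpow' (a := 0) (b := 1) hr).comp_sub_left 1).symm
  exact h.1.lintegral_lt_top

theorem enorm_fderiv_eq_enorm_iteratedFDerivWithin_one {E F : Type*} [NormedAddCommGroup E]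
    [NormedSpace ℝ E] [NormedAddCommGroup F] [NormedSpace ℝ F] {f : E → F} {U : Set E} {y : E}
    (hU : IsOpen U) (hy : y ∈ U) :
    ‖fderiv ℝ f y‖ₑ = ‖iteratedFDerivWithin ℝ 1 f U y‖ₑ := by
  rw [← ofReal_norm, ← ofReal_norm, iteratedFDerivWithin_of_isOpen 1 hU hy,
    ← norm_iteratedFDeriv_fderiv, norm_iteratedFDeriv_zero]

theorem enorm_fderiv_fderiv_eq_enorm_iteratedFDerivWithin_two {E F : Type*}
    [NormedAddCommGroup E] [NormedSpace ℝ E] [NormedAddCommGroup F] [NormedSpace ℝ F]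
    {f : E → F} {U : Set E} {y : E} (hU : IsOpen U) (hy : y ∈ U) :
    ‖fderiv ℝ (fderiv ℝ f) y‖ₑ = ‖iteratedFDerivWithin ℝ 2 f U y‖ₑ := by
  rw [← ofReal_norm, ← ofReal_norm, iteratedFDerivWithin_of_isOpen 2 hU hy,
    ← norm_iteratedFDeriv_fderiv, ← norm_iteratedFDeriv_fderiv, norm_iteratedFDeriv_zero]

section Taylor

variable {E F : Type*} [NormedAddCommGroup E] [NormedSpace ℝ E]
  [NormedAddCommGroup F] [NormedSpace ℝ F] [CompleteSpace F]
  {f : E → F} {U : Set E} {x y : E}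

theorem sub_sub_fderiv_eq_integral (hU : IsOpen U) (hf : ContDiffOn ℝ 2 f U)
    (hxy : segment ℝ y x ⊆ U) :
    f x - f y - fderiv ℝ f y (x - y) =
      ∫ t in Ioc (0 : ℝ) 1,
        (1 - t) • fderiv ℝ (fderiv ℝ f) (y + t • (x - y)) (x - y) (x - y) := by
  set u := x - y
  set γ : ℝ → E := fun t => y + t • u
  set D2 := fderiv ℝ (fderiv ℝ f)
  have hγU : ∀ t ∈ Icc (0 : ℝ) 1, γ t ∈ U := fun t ht =>
    hxy (by rw [segment_eq_image']; exact ⟨t, ht, rfl⟩)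
  have hγ : ∀ t, HasDerivAt γ u t := fun t => by
    simpa [γ] using ((hasDerivAt_id t).smul_const u).const_add y
  have hD1 : ContDiffOn ℝ 1 (fderiv ℝ f) U := hf.fderiv_of_isOpen hU (by norm_num)
  have hD2 : ContinuousOn D2 U := hD1.continuousOn_fderiv_of_isOpen hU le_rfl
  -- `f (γ t) + (1 - t) • f' (γ t) u` is the primitive of the remainder integrand
  have hF : ∀ t ∈ Icc (0 : ℝ) 1,
      HasDerivAt (fun s => f (γ s) + (1 - s) • fderiv ℝ f (γ s) u)
        ((1 - t) • D2 (γ t) u u) t := by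
    intro t ht
    have hfγ : HasDerivAt (fun s => f (γ s)) (fderiv ℝ f (γ t) u) t :=
      ((hf.differentiableOn (by norm_num)).differentiableAt
        (hU.mem_nhds (hγU t ht))).hasFDerivAt.comp_hasDerivAt t (hγ t)
    have hDfγ : HasDerivAt (fun s => fderiv ℝ f (γ s) u) (D2 (γ t) u u) t := by
      have := ((hD1.differentiableOn one_ne_zero).differentiableAt
        (hU.mem_nhds (hγU t ht))).hasFDerivAt.comp_hasDerivAt t (hγ t)
      simpa using this.clm_apply (hasDerivAt_const t u)
    refine (hfγ.add (((hasDerivAt_id t).const_sub 1).smul hDfγ)).congr_deriv ?_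
    simp only [id_eq, neg_one_smul]
    abel
  have hcont : ContinuousOn (fun t => (1 - t) • D2 (γ t) u u) (Icc 0 1) :=
    (continuousOn_const.sub continuousOn_id).smul
      (((hD2.comp (by fun_prop) hγU).clm_apply continuousOn_const).clm_apply continuousOn_const)
  rw [← intervalIntegral.integral_of_le zero_le_one,
    intervalIntegral.integral_eq_sub_of_hasDerivAt (fun t ht => hF t (by simpa using ht))
      (hcont.intervalIntegrable_of_Icc zero_le_one)]
  simp [γ, u]
  abel

theorem enorm_taylor_remainder_le (hU : IsOpen U) (hf : ContDiffOn ℝ 2 f U)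
    (hxy : segment ℝ y x ⊆ U) :
    ‖f x - f y - fderiv ℝ f y (x - y)‖ₑ ≤ ‖x - y‖ₑ ^ 2 * ∫⁻ t in Ioc (0 : ℝ) 1,
      ENNReal.ofReal (1 - t) * ‖fderiv ℝ (fderiv ℝ f) (y + t • (x - y))‖ₑ := by
  rw [sub_sub_fderiv_eq_integral hU hf hxy, mul_comm, ← lintegral_mul_const' _ _ (by simp)]
  refine (enorm_integral_le_lintegral_enorm _).trans (setLIntegral_mono' measurableSet_Ioc ?_)
  intro t ht
  rw [enorm_smul, Real.enorm_of_nonneg (by linarith [ht.2])]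
  simpa only [mul_assoc, sq] using
    mul_le_mul_right ((fderiv ℝ (fderiv ℝ f) _).le_opENorm₂ _ _) _

theorem enorm_le_enorm_add_fderiv_add_remainder (hU : IsOpen U) (hf : ContDiffOn ℝ 2 f U)
    (hxy : segment ℝ y x ⊆ U) :
    ‖f x‖ₑ ≤ ‖f y‖ₑ + ‖x - y‖ₑ * ‖fderiv ℝ f y‖ₑ + ‖x - y‖ₑ ^ 2 * ∫⁻ t in Ioc (0 : ℝ) 1,
      ENNReal.ofReal (1 - t) * ‖fderiv ℝ (fderiv ℝ f) (y + t • (x - y))‖ₑ := by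
  calc ‖f x‖ₑ = ‖f y + fderiv ℝ f y (x - y) + (f x - f y - fderiv ℝ f y (x - y))‖ₑ := by
        congr 1; abel
    _ ≤ ‖f y‖ₑ + ‖fderiv ℝ f y (x - y)‖ₑ + ‖f x - f y - fderiv ℝ f y (x - y)‖ₑ :=
        (enorm_add_le _ _).trans (by gcongr; exact enorm_add_le _ _)
    _ ≤ _ := by
        gcongr
        · rw [mul_comm]; exact (fderiv ℝ f y).le_opENorm _
        · exact enorm_taylor_remainder_le hU hf hxy

variable [MeasurableSpace E] [OpensMeasurableSpace E] {ρ : ℝ}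

theorem enorm_mul_measure_closedBall_le (μ : Measure E) (hU : IsOpen U)
    (hf : ContDiffOn ℝ 2 f U) (hB : closedBall x ρ ⊆ U) :
    ‖f x‖ₑ * μ (closedBall x ρ) ≤ ∫⁻ y in closedBall x ρ, ‖f y‖ₑ ∂μ +
      ENNReal.ofReal ρ * ∫⁻ y in closedBall x ρ, ‖fderiv ℝ f y‖ₑ ∂μ +
      ENNReal.ofReal ρ ^ 2 * ∫⁻ y in closedBall x ρ, (∫⁻ t in Ioc (0 : ℝ) 1,
        ENNReal.ofReal (1 - t) * ‖fderiv ℝ (fderiv ℝ f) (y + t • (x - y))‖ₑ) ∂μ := by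
  have hfm : AEMeasurable (fun y => ‖f y‖ₑ) (μ.restrict (closedBall x ρ)) :=
    (hf.continuousOn.mono hB).enorm.aemeasurable measurableSet_closedBall
  have hDfm : AEMeasurable (fun y => ENNReal.ofReal ρ * ‖fderiv ℝ f y‖ₑ)
      (μ.restrict (closedBall x ρ)) :=
    ((measurable_fderiv ℝ f).enorm.const_mul _).aemeasurable
  rw [← setLIntegral_const, ← lintegral_const_mul' _ _ ENNReal.ofReal_ne_top,
    ← lintegral_const_mul' _ _ (by simp), ← lintegral_add_left' hfm,
    ← lintegral_add_left' (f := fun y => ‖f y‖ₑ + ENNReal.ofReal ρ * ‖fderiv ℝ f y‖ₑ)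
      (hfm.add hDfm)]
  refine setLIntegral_mono' measurableSet_closedBall fun y hy => ?_
  have hxy : ‖x - y‖ₑ ≤ ENNReal.ofReal ρ := by
    rw [← ofReal_norm, ← dist_eq_norm, dist_comm]
    exact ENNReal.ofReal_le_ofReal hy
  have hseg : segment ℝ y x ⊆ U :=
    ((convex_closedBall x ρ).segment_subset hy
      (mem_closedBall_self (nonempty_closedBall.1 ⟨y, hy⟩))).trans hB
  exact (enorm_le_enorm_add_fderiv_add_remainder hU hf hseg).trans (by gcongr)

end Taylor

section Haar

variable {E : Type*} [NormedAddCommGroup E] [NormedSpace ℝ E] [MeasurableSpace E]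
  [BorelSpace E] [FiniteDimensional ℝ E] (μ : Measure E) [μ.IsAddHaarMeasure]
  {g : E → ℝ≥0∞}

theorem lintegral_comp_smul_add (hg : Measurable g) {a : ℝ} (ha : a ≠ 0) (c : E) :
    ∫⁻ y, g (a • y + c) ∂μ = ENNReal.ofReal |(a ^ finrank ℝ E)⁻¹| * ∫⁻ y, g y ∂μ := by
  rw [← lintegral_map (f := fun z => g (z + c)) (hg.comp (measurable_add_const c))
    (measurable_const_smul a), Measure.map_addHaar_smul μ ha, lintegral_smul_measure,
    lintegral_add_right_eq_self g c, smul_eq_mul]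

theorem setLIntegral_closedBall_comp_homothety_le (hg : Measurable g) {s : ℝ} (hs : 0 < s)
    (hs1 : s ≤ 1) (x : E) (ρ : ℝ) :
    ∫⁻ y in closedBall x ρ, g (x + s • (y - x)) ∂μ ≤
      ENNReal.ofReal (s ^ finrank ℝ E)⁻¹ * ∫⁻ y in closedBall x ρ, g y ∂μ := by
  have hmaps : ∀ y ∈ closedBall x ρ, x + s • (y - x) ∈ closedBall x ρ := fun y hy => by
    rw [mem_closedBall, dist_eq_norm, add_sub_cancel_left, norm_smul, Real.norm_of_nonneg hs.le]
    exact (mul_le_of_le_one_left (norm_nonneg _) hs1).trans (by rwa [← dist_eq_norm])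
  calc ∫⁻ y in closedBall x ρ, g (x + s • (y - x)) ∂μ
      = ∫⁻ y in closedBall x ρ, (closedBall x ρ).indicator g (x + s • (y - x)) ∂μ :=
        setLIntegral_congr_fun measurableSet_closedBall fun y hy =>
          (indicator_of_mem (hmaps y hy) g).symm
    _ ≤ ∫⁻ y, (closedBall x ρ).indicator g (s • y + (x - s • x)) ∂μ := by
        refine (setLIntegral_le_lintegral _ _).trans_eq (lintegral_congr fun y => ?_)
        congr 1; module
    _ = _ := by
        rw [lintegral_comp_smul_add μ (hg.indicator measurableSet_closedBall) hs.ne',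
          lintegral_indicator measurableSet_closedBall, abs_of_pos (by positivity)]

theorem setLIntegral_closedBall_segment_le (hg : Measurable g) {p : ℝ} (hp : 1 ≤ p)
    (x : E) (ρ : ℝ) :
    ∫⁻ y in closedBall x ρ,
        (∫⁻ t in Ioc (0 : ℝ) 1, ENNReal.ofReal (1 - t) * g (y + t • (x - y))) ∂μ ≤
      (∫⁻ t in Ioc (0 : ℝ) 1, ENNReal.ofReal ((1 - t) ^ (1 - finrank ℝ E / p))) *
        ((∫⁻ y in closedBall x ρ, g y ^ p ∂μ) ^ (1 / p) * μ (closedBall x ρ) ^ (1 - 1 / p)) := by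
  set B := closedBall x ρ
  set n := finrank ℝ E
  rw [lintegral_lintegral_swap (by fun_prop), ← lintegral_mul_const _ (by fun_prop)]
  refine setLIntegral_mono' measurableSet_Ioc fun t ht => ?_
  rcases ht.2.eq_or_lt with rfl | ht1
  · simp
  set s := 1 - t
  have hs : 0 < s := sub_pos.2 ht1
  have hφ : ∀ y, y + t • (x - y) = x + s • (y - x) := fun y => by simp only [s]; module
  simp only [hφ]
  rw [lintegral_const_mul' _ _ ENNReal.ofReal_ne_top]
  calc ENNReal.ofReal s * ∫⁻ y in B, g (x + s • (y - x)) ∂μ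
      ≤ ENNReal.ofReal s * ((∫⁻ y in B, g (x + s • (y - x)) ^ p ∂μ) ^ (1 / p) *
          μ B ^ (1 - 1 / p)) := by
        gcongr
        exact setLIntegral_le_rpow_mul_measure_rpow hp (hg.comp (by fun_prop)).aemeasurable
    _ ≤ ENNReal.ofReal s * ((ENNReal.ofReal (s ^ n)⁻¹ * ∫⁻ y in B, g y ^ p ∂μ) ^ (1 / p) *
          μ B ^ (1 - 1 / p)) := by
        gcongr
        exact setLIntegral_closedBall_comp_homothety_le μ (hg.pow_const p) hs
          (by linarith [ht.1]) x ρ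
    _ = _ := by
        have hpow : s * ((s ^ n)⁻¹) ^ (1 / p) = s ^ (1 - n / p) := by
          rw [← Real.rpow_natCast, ← Real.rpow_neg hs.le, ← Real.rpow_mul hs.le,
            sub_eq_add_neg, Real.rpow_add hs, Real.rpow_one]
          ring_nf
        rw [ENNReal.mul_rpow_of_nonneg _ _ (by positivity),
          ENNReal.ofReal_rpow_of_nonneg (by positivity) (by positivity), ← hpow,
          ENNReal.ofReal_mul hs.le]
        ring

variable {F : Type*} [NormedAddCommGroup F] [NormedSpace ℝ F] [CompleteSpace F]
  {f : E → F} {U : Set E} {x : E} {ρ p : ℝ}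

theorem enorm_mul_measure_closedBall_rpow_le (hU : IsOpen U) (hf : ContDiffOn ℝ 2 f U)
    (hρ : 0 < ρ) (hB : closedBall x ρ ⊆ U) (hp : 1 ≤ p) :
    ‖f x‖ₑ * μ (closedBall x ρ) ^ (1 / p) ≤
      (∫⁻ y in closedBall x ρ, ‖iteratedFDerivWithin ℝ 0 f U y‖ₑ ^ p ∂μ) ^ (1 / p) +
      ENNReal.ofReal ρ *
        (∫⁻ y in closedBall x ρ, ‖iteratedFDerivWithin ℝ 1 f U y‖ₑ ^ p ∂μ) ^ (1 / p) +
      ENNReal.ofReal ρ ^ 2 *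
        (∫⁻ t in Ioc (0 : ℝ) 1, ENNReal.ofReal ((1 - t) ^ (1 - finrank ℝ E / p))) *
        (∫⁻ y in closedBall x ρ, ‖iteratedFDerivWithin ℝ 2 f U y‖ₑ ^ p ∂μ) ^ (1 / p) := by
  set B := closedBall x ρ
  have hV0 : μ B ≠ 0 := (measure_closedBall_pos μ x hρ).ne'
  have hVtop : μ B ≠ ⊤ := measure_closedBall_lt_top.ne
  have h0 : ∫⁻ y in B, ‖f y‖ₑ ∂μ ≤
      (∫⁻ y in B, ‖iteratedFDerivWithin ℝ 0 f U y‖ₑ ^ p ∂μ) ^ (1 / p) * μ B ^ (1 - 1 / p) := by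
    simp_rw [← ofReal_norm, norm_iteratedFDerivWithin_zero, ofReal_norm]
    exact setLIntegral_le_rpow_mul_measure_rpow hp
      ((hf.continuousOn.mono hB).enorm.aemeasurable measurableSet_closedBall)
  have e1 : ∫⁻ y in B, ‖fderiv ℝ f y‖ₑ ^ p ∂μ =
      ∫⁻ y in B, ‖iteratedFDerivWithin ℝ 1 f U y‖ₑ ^ p ∂μ :=
    setLIntegral_congr_fun measurableSet_closedBall fun y hy => by
      rw [enorm_fderiv_eq_enorm_iteratedFDerivWithin_one hU (hB hy)]
  have e2 : ∫⁻ y in B, ‖fderiv ℝ (fderiv ℝ f) y‖ₑ ^ p ∂μ =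
      ∫⁻ y in B, ‖iteratedFDerivWithin ℝ 2 f U y‖ₑ ^ p ∂μ :=
    setLIntegral_congr_fun measurableSet_closedBall fun y hy => by
      rw [enorm_fderiv_fderiv_eq_enorm_iteratedFDerivWithin_two hU (hB hy)]
  have h1 := setLIntegral_le_rpow_mul_measure_rpow hp
    (measurable_fderiv ℝ f).enorm.aemeasurable (μ := μ) (s := B)
  have h2 := setLIntegral_closedBall_segment_le μ (measurable_fderiv ℝ (fderiv ℝ f)).enorm hp x ρ
  rw [e1] at h1
  rw [e2] at h2
  have hq : 0 ≤ 1 - 1 / p := sub_nonneg.2 ((div_le_one (by linarith)).2 hp)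
  rw [← ENNReal.mul_le_mul_iff_left (c := μ B ^ (1 - 1 / p))
    (ENNReal.rpow_pos (pos_iff_ne_zero.2 hV0) hVtop).ne' (ENNReal.rpow_ne_top_of_nonneg hq hVtop),
    mul_assoc, ← ENNReal.rpow_add _ _ hV0 hVtop, add_sub_cancel, ENNReal.rpow_one]
  refine (enorm_mul_measure_closedBall_le μ hU hf hB).trans ?_
  grw [h0, h1, h2]
  exact le_of_eq (by ring)

end Haar

theorem norm_mem_Icc_of_mem_closedBall_half {E : Type*} [SeminormedAddCommGroup E] {x z : E}
    (hz : z ∈ closedBall x (‖x‖ / 2)) : ‖x‖ / 2 ≤ ‖z‖ ∧ ‖z‖ ≤ 3 * (‖x‖ / 2) := by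
  rw [mem_closedBall, dist_eq_norm] at hz
  constructor <;> linarith [norm_sub_norm_le x z, norm_sub_rev x z, norm_sub_norm_le z x]

theorem closedBall_half_subset_compl_zero {E : Type*} [NormedAddCommGroup E] {x : E}
    (hx : x ≠ 0) : closedBall x (‖x‖ / 2) ⊆ {0}ᶜ := fun _ hz =>
  norm_pos_iff.1 ((half_pos (norm_pos_iff.2 hx)).trans_le
    (norm_mem_Icc_of_mem_closedBall_half hz).1)

theorem Real.rpow_le_three_mul_rpow {ρ r e : ℝ} (hρ : 0 < ρ) (h1 : ρ ≤ r) (h3 : r ≤ 3 * ρ)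
    (he : -1 ≤ e) : ρ ^ e ≤ 3 * r ^ e := by
  rcases le_or_gt 0 e with he0 | he0
  · exact (Real.rpow_le_rpow hρ.le h1 he0).trans
      (le_mul_of_one_le_left (Real.rpow_nonneg (hρ.le.trans h1) _) (by norm_num))
  · have hr : 0 < r := hρ.trans_le h1
    calc ρ ^ e ≤ (r / 3) ^ e := Real.rpow_le_rpow_of_nonpos (by positivity) (by linarith) he0.le
      _ = 3 ^ (-e) * r ^ e := by
        rw [Real.div_rpow hr.le (by norm_num), Real.rpow_neg (by norm_num)]; ring
      _ ≤ 3 * r ^ e := by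
        gcongr
        simpa using Real.rpow_le_rpow_of_exponent_le (by norm_num : (1 : ℝ) ≤ 3)
          (by linarith : -e ≤ 1)

theorem ofReal_pow_mul_rpow_le {ρ : ℝ} (hρ : 0 < ρ) {j : ℕ} {I N : ℝ≥0∞}
    (h : ENNReal.ofReal (ρ ^ (3 * (j : ℝ) - 1)) * I ≤ 3 * N) :
    ENNReal.ofReal ρ ^ j * I ^ (1 / 3 : ℝ) ≤
      ENNReal.ofReal (ρ ^ (1 / 3 : ℝ)) * (3 * N) ^ (1 / 3 : ℝ) := by
  have hρj : ρ ^ j = ρ ^ (1 / 3 : ℝ) * (ρ ^ (3 * (j : ℝ) - 1)) ^ (1 / 3 : ℝ) := by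
    rw [← Real.rpow_mul hρ.le, ← Real.rpow_add hρ, ← Real.rpow_natCast]
    ring_nf
  calc ENNReal.ofReal ρ ^ j * I ^ (1 / 3 : ℝ)
      = (ENNReal.ofReal ρ * (ENNReal.ofReal (ρ ^ (3 * (j : ℝ) - 1)) * I)) ^ (1 / 3 : ℝ) := by
        rw [ENNReal.mul_rpow_of_nonneg _ _ (by norm_num),
          ENNReal.mul_rpow_of_nonneg _ _ (by norm_num),
          ENNReal.ofReal_rpow_of_nonneg hρ.le (by norm_num),
          ENNReal.ofReal_rpow_of_nonneg (by positivity) (by norm_num), ← mul_assoc,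
          ← ENNReal.ofReal_mul (by positivity), ← hρj, ENNReal.ofReal_pow hρ.le]
    _ ≤ _ := by
        grw [h]
        rw [ENNReal.mul_rpow_of_nonneg _ _ (by norm_num),
          ENNReal.ofReal_rpow_of_nonneg hρ.le (by norm_num)]

/-- The cube of the `L'^3_{-1-j}` norm of `D^j v` on `ℝ⁴ \ {0}`. -/
noncomputable def weightedDerivIntegral (v : EuclideanSpace ℝ (Fin 4) → ℝ) (j : ℕ) : ℝ≥0∞ :=
  ∫⁻ y in ({0}ᶜ : Set (EuclideanSpace ℝ (Fin 4))),
    ENNReal.ofReal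
      (‖iteratedFDerivWithin ℝ j v ({0}ᶜ : Set (EuclideanSpace ℝ (Fin 4))) y‖ ^ (3 : ℝ) *
        ‖y‖ ^ (3 * (j : ℝ) - 1))

theorem ofReal_rpow_mul_setLIntegral_closedBall_le (v : EuclideanSpace ℝ (Fin 4) → ℝ)
    {x : EuclideanSpace ℝ (Fin 4)} (hx : x ≠ 0) (j : ℕ) :
    ENNReal.ofReal ((‖x‖ / 2) ^ (3 * (j : ℝ) - 1)) *
        ∫⁻ y in closedBall x (‖x‖ / 2), ‖iteratedFDerivWithin ℝ j v {0}ᶜ y‖ₑ ^ (3 : ℝ) ≤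
      3 * weightedDerivIntegral v j := by
  rw [← lintegral_const_mul' _ _ ENNReal.ofReal_ne_top, weightedDerivIntegral,
    ← lintegral_const_mul' _ _ (by norm_num)]
  refine (setLIntegral_mono' measurableSet_closedBall fun z hz => ?_).trans
    (lintegral_mono' (Measure.restrict_mono (closedBall_half_subset_compl_zero hx) le_rfl) le_rfl)
  obtain ⟨h1, h3⟩ := norm_mem_Icc_of_mem_closedBall_half hz
  rw [← ofReal_norm, ENNReal.ofReal_rpow_of_nonneg (norm_nonneg _) (by norm_num),
    ← ENNReal.ofReal_mul (by positivity), ← ENNReal.ofReal_ofNat 3,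
    ← ENNReal.ofReal_mul (by norm_num)]
  refine ENNReal.ofReal_le_ofReal ?_
  have hweight := Real.rpow_le_three_mul_rpow (by positivity) h1 h3 (e := 3 * (j : ℝ) - 1)
    (by linarith [j.cast_nonneg (α := ℝ)])
  calc _ ≤ 3 * ‖z‖ ^ (3 * (j : ℝ) - 1) * ‖iteratedFDerivWithin ℝ j v {0}ᶜ z‖ ^ (3 : ℝ) := by
        gcongr
    _ = _ := by ring

theorem volume_closedBall_rpow_one_third (x : EuclideanSpace ℝ (Fin 4)) {ρ : ℝ} (hρ : 0 < ρ) :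
    volume (closedBall x ρ) ^ (1 / 3 : ℝ) = ENNReal.ofReal (ρ ^ (1 / 3 : ℝ)) *
      (ENNReal.ofReal ρ * volume (ball (0 : EuclideanSpace ℝ (Fin 4)) 1) ^ (1 / 3 : ℝ)) := by
  rw [Measure.addHaar_closedBall volume x hρ.le, finrank_euclideanSpace_fin,
    ENNReal.mul_rpow_of_nonneg _ _ (by norm_num),
    ENNReal.ofReal_rpow_of_nonneg (by positivity) (by norm_num), ← mul_assoc,
    ← ENNReal.ofReal_mul (by positivity), ← Real.rpow_natCast, ← Real.rpow_mul hρ.le]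
  congr 2
  rw [← Real.rpow_add_one hρ.ne']
  norm_num

theorem enorm_mul_ofReal_mul_le_sum_weightedDerivIntegral {v : EuclideanSpace ℝ (Fin 4) → ℝ}
    (hv : ContDiffOn ℝ 2 v {0}ᶜ) {x : EuclideanSpace ℝ (Fin 4)} (hx : x ≠ 0) :
    ‖v x‖ₑ * ENNReal.ofReal (‖x‖ / 2) *
        volume (ball (0 : EuclideanSpace ℝ (Fin 4)) 1) ^ (1 / 3 : ℝ) ≤
      3 ^ (1 / 3 : ℝ) * (1 + ∫⁻ t in Ioc (0 : ℝ) 1, ENNReal.ofReal ((1 - t) ^ (-(1 / 3) : ℝ))) *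
        ∑ j ∈ Finset.range 3, weightedDerivIntegral v j ^ (1 / 3 : ℝ) := by
  set ρ := ‖x‖ / 2
  set Θ := ∫⁻ t in Ioc (0 : ℝ) 1, ENNReal.ofReal ((1 - t) ^ (-(1 / 3) : ℝ))
  set I := fun j : ℕ => ∫⁻ y in closedBall x ρ, ‖iteratedFDerivWithin ℝ j v {0}ᶜ y‖ₑ ^ (3 : ℝ)
  set N := weightedDerivIntegral v
  have hρ : 0 < ρ := by positivity
  have hloc := enorm_mul_measure_closedBall_rpow_le volume isOpen_compl_singleton hv hρ
    (closedBall_half_subset_compl_zero hx) (p := 3) (by norm_num)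
  rw [finrank_euclideanSpace_fin, volume_closedBall_rpow_one_third x hρ] at hloc
  have hj : ∀ j, ENNReal.ofReal ρ ^ j * I j ^ (1 / 3 : ℝ) ≤
      ENNReal.ofReal (ρ ^ (1 / 3 : ℝ)) * (3 * N j) ^ (1 / 3 : ℝ) := fun j =>
    ofReal_pow_mul_rpow_le hρ (ofReal_rpow_mul_setLIntegral_closedBall_le v hx j)
  refine (ENNReal.mul_le_mul_iff_right (a := ENNReal.ofReal (ρ ^ (1 / 3 : ℝ)))
    (ENNReal.ofReal_pos.2 (by positivity)).ne' ENNReal.ofReal_ne_top).1 ?_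
  calc _ = _ := by ring
    _ ≤ _ := hloc
    _ = ENNReal.ofReal ρ ^ 0 * I 0 ^ (1 / 3 : ℝ) + ENNReal.ofReal ρ ^ 1 * I 1 ^ (1 / 3 : ℝ) +
        Θ * (ENNReal.ofReal ρ ^ 2 * I 2 ^ (1 / 3 : ℝ)) := by norm_num [Θ, I]; ring
    _ ≤ ENNReal.ofReal (ρ ^ (1 / 3 : ℝ)) * (3 * N 0) ^ (1 / 3 : ℝ) +
        ENNReal.ofReal (ρ ^ (1 / 3 : ℝ)) * (3 * N 1) ^ (1 / 3 : ℝ) +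
        Θ * (ENNReal.ofReal (ρ ^ (1 / 3 : ℝ)) * (3 * N 2) ^ (1 / 3 : ℝ)) :=
      add_le_add (add_le_add (hj 0) (hj 1)) (mul_le_mul_right (hj 2) Θ)
    _ = ENNReal.ofReal (ρ ^ (1 / 3 : ℝ)) * (3 ^ (1 / 3 : ℝ) *
        (N 0 ^ (1 / 3 : ℝ) + N 1 ^ (1 / 3 : ℝ) + Θ * N 2 ^ (1 / 3 : ℝ))) := by
      simp only [ENNReal.mul_rpow_of_nonneg _ _ (by norm_num : (0 : ℝ) ≤ 1 / 3)]
      ring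
    _ ≤ ENNReal.ofReal (ρ ^ (1 / 3 : ℝ)) * (3 ^ (1 / 3 : ℝ) *
        ((N 0 ^ (1 / 3 : ℝ) + N 1 ^ (1 / 3 : ℝ) + N 2 ^ (1 / 3 : ℝ)) +
          Θ * (N 0 ^ (1 / 3 : ℝ) + N 1 ^ (1 / 3 : ℝ) + N 2 ^ (1 / 3 : ℝ)))) := by
      gcongr _ * (_ * ?_)
      exact add_le_add le_self_add (mul_le_mul_right le_add_self _)
    _ = _ := by simp only [Finset.sum_range_succ, Finset.sum_range_zero, zero_add]; ring

theorem exists_enorm_mul_enorm_le_sum_weightedDerivIntegral :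
    ∃ K : ℝ≥0∞, K ≠ ⊤ ∧ ∀ v : EuclideanSpace ℝ (Fin 4) → ℝ, ContDiffOn ℝ 2 v {0}ᶜ →
      ∀ x ≠ 0, ‖v x‖ₑ * ‖x‖ₑ ≤
        K * ∑ j ∈ Finset.range 3, weightedDerivIntegral v j ^ (1 / 3 : ℝ) := by
  set κ := volume (ball (0 : EuclideanSpace ℝ (Fin 4)) 1) ^ (1 / 3 : ℝ)
  set Θ := ∫⁻ t in Ioc (0 : ℝ) 1, ENNReal.ofReal ((1 - t) ^ (-(1 / 3) : ℝ))
  have hκ0 : κ ≠ 0 :=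
    (ENNReal.rpow_pos (measure_ball_pos volume 0 one_pos) measure_ball_lt_top.ne).ne'
  have hκ : κ ≠ ⊤ := ENNReal.rpow_ne_top_of_nonneg (by norm_num) measure_ball_lt_top.ne
  have hΘ : Θ ≠ ⊤ := (lintegral_one_sub_rpow_lt_top (by norm_num)).ne
  refine ⟨2 * 3 ^ (1 / 3 : ℝ) * (1 + Θ) * κ⁻¹, by finiteness, fun v hv x hx => ?_⟩
  have hx2 : ‖x‖ₑ = 2 * ENNReal.ofReal (‖x‖ / 2) := by
    have h := ENNReal.ofReal_mul (p := 2) (q := ‖x‖ / 2) zero_le_two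
    rwa [mul_div_cancel₀ _ two_ne_zero, ENNReal.ofReal_ofNat, ofReal_norm] at h
  calc ‖v x‖ₑ * ‖x‖ₑ = 2 * κ⁻¹ * (‖v x‖ₑ * ENNReal.ofReal (‖x‖ / 2) * κ) := by
        rw [hx2, mul_mul_mul_comm, ENNReal.inv_mul_cancel hκ0 hκ]; ring
    _ ≤ _ := by
        grw [enorm_mul_ofReal_mul_le_sum_weightedDerivIntegral hv hx]
        exact le_of_eq (by ring)

theorem ofReal_abs_mul_rpow_three_mul_rpow_two {a b r : ℝ} (hr : 0 < r) :
    ENNReal.ofReal (|a * b| ^ (3 : ℝ) * r ^ (2 : ℝ)) =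
      ENNReal.ofReal (|a| ^ (3 : ℝ) * r ^ (-1 : ℝ)) * (‖b‖ₑ * ENNReal.ofReal r) ^ (3 : ℝ) := by
  rw [Real.enorm_eq_ofReal_abs, ← ENNReal.ofReal_mul (abs_nonneg _),
    ENNReal.ofReal_rpow_of_nonneg (by positivity) (by norm_num),
    ← ENNReal.ofReal_mul (by positivity), abs_mul,
    Real.mul_rpow (abs_nonneg _) (abs_nonneg _), Real.mul_rpow (abs_nonneg _) hr.le]
  congr 1
  have : r ^ (2 : ℝ) = r ^ (-1 : ℝ) * r ^ (3 : ℝ) := by rw [← Real.rpow_add hr]; norm_num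
  rw [this]
  ring

/-- The weighted estimate `‖(w v)/r‖_{L'^3_{-3}} ≤ C ‖v‖_{W'^{2,3}_{-1}} ‖w‖_{L'^3_{-1}}`
on `ℝ⁴ \ {0}`: there is `C > 0` such that for every `C²` function `v` on
`ℝ⁴ \ {0}` and every measurable `w`,
`(∫ |w v|³ ‖x‖²)^{1/3} ≤ C (Σ_{j=0}^{2} (∫ ‖D^j v‖³ ‖y‖^{3j-1})^{1/3}) (∫ |w|³ ‖y‖⁻¹)^{1/3}`,
the inequality being trivially true when the right-hand side is infinite. -/
theorem weighted_product_estimate :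
    ∃ C : ℝ, 0 < C ∧
      ∀ v w : EuclideanSpace ℝ (Fin 4) → ℝ,
        ContDiffOn ℝ 2 v {0}ᶜ → Measurable w →
          (∫⁻ x in ({0}ᶜ : Set (EuclideanSpace ℝ (Fin 4))),
              ENNReal.ofReal (|w x * v x| ^ (3 : ℝ) * ‖x‖ ^ (2 : ℝ))) ^ ((1 : ℝ) / 3) ≤
            ENNReal.ofReal C *
              (∑ j ∈ Finset.range 3,
                (∫⁻ y in ({0}ᶜ : Set (EuclideanSpace ℝ (Fin 4))),
                    ENNReal.ofReal
                      (‖iteratedFDerivWithin ℝ j v ({0}ᶜ : Set (EuclideanSpace ℝ (Fin 4))) y‖ ^ (3 : ℝ) *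
                        ‖y‖ ^ (3 * (j : ℝ) - 1))) ^ ((1 : ℝ) / 3)) *
              (∫⁻ y in ({0}ᶜ : Set (EuclideanSpace ℝ (Fin 4))),
                  ENNReal.ofReal (|w y| ^ (3 : ℝ) * ‖y‖ ^ (-1 : ℝ))) ^ ((1 : ℝ) / 3) := by
  obtain ⟨K, hK, hpt⟩ := exists_enorm_mul_enorm_le_sum_weightedDerivIntegral
  refine ⟨K.toReal + 1, by positivity, fun v w hv hw => ?_⟩
  set S := ∑ j ∈ Finset.range 3, weightedDerivIntegral v j ^ (1 / 3 : ℝ)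
  set W := ∫⁻ y in ({0}ᶜ : Set (EuclideanSpace ℝ (Fin 4))),
    ENNReal.ofReal (|w y| ^ (3 : ℝ) * ‖y‖ ^ (-1 : ℝ))
  have hLHS : ∫⁻ x in ({0}ᶜ : Set (EuclideanSpace ℝ (Fin 4))),
      ENNReal.ofReal (|w x * v x| ^ (3 : ℝ) * ‖x‖ ^ (2 : ℝ)) ≤ W * (K * S) ^ (3 : ℝ) := by
    rw [← lintegral_mul_const'' _ (by fun_prop)]
    refine setLIntegral_mono' (measurableSet_singleton 0).compl fun x hx => ?_
    rw [ofReal_abs_mul_rpow_three_mul_rpow_two (norm_pos_iff.2 hx), ofReal_norm]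
    exact mul_le_mul_right (ENNReal.rpow_le_rpow (hpt v hv x hx) (by norm_num)) _
  have hKC : K ≤ ENNReal.ofReal (K.toReal + 1) :=
    (ENNReal.le_ofReal_iff_toReal_le hK (by positivity)).2 (by linarith)
  calc _ ≤ (W * (K * S) ^ (3 : ℝ)) ^ ((1 : ℝ) / 3) := by gcongr
    _ = K * S * W ^ ((1 : ℝ) / 3) := by
      rw [ENNReal.mul_rpow_of_nonneg _ _ (by norm_num), ← ENNReal.rpow_mul]
      norm_num
      ring
    _ ≤ _ := by grw [hKC]; exact le_rfl
end

section
/- With the notation of the extreme Myers–Perry slice data, for all a, b > 0, r > 0 and θ ∈ (0, π/2) the following chain of inequalities holds for the conformal factor Φ₀: (abμ)^{1/4} ≤ [ (r²+ab+a²)(r²+ab+b²) ]^{1/4} ≤ r·Φ₀ ≤ [ (r²+ab+a²)(r²+ab+b²) + μ² ]^{1/4}. -/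
noncomputable section

namespace MP

/-- `Σ = r² + ab + a²cos²θ + b²sin²θ`. -/
def Sig (a b r θ : ℝ) : ℝ :=
  r ^ 2 + a * b + a ^ 2 * Real.cos θ ^ 2 + b ^ 2 * Real.sin θ ^ 2

/-- `A = r² + ab + a²`. -/
def Afun (a b r : ℝ) : ℝ := r ^ 2 + a * b + a ^ 2

/-- `B = r² + ab + b²`. -/
def Bfun (a b r : ℝ) : ℝ := r ^ 2 + a * b + b ^ 2

/-- `σ₁₁ = a²μ sin⁴θ/Σ + A sin²θ`, with `μ = (a+b)²`. -/
def sig11 (a b r θ : ℝ) : ℝ :=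
  a ^ 2 * (a + b) ^ 2 * Real.sin θ ^ 4 / Sig a b r θ + Afun a b r * Real.sin θ ^ 2

/-- `σ₂₂ = b²μ cos⁴θ/Σ + B cos²θ`, with `μ = (a+b)²`. -/
def sig22 (a b r θ : ℝ) : ℝ :=
  b ^ 2 * (a + b) ^ 2 * Real.cos θ ^ 4 / Sig a b r θ + Bfun a b r * Real.cos θ ^ 2

/-- `σ₁₂ = abμ sin²θ cos²θ/Σ`, with `μ = (a+b)²`. -/
def sig12 (a b r θ : ℝ) : ℝ :=
  a * b * (a + b) ^ 2 * Real.sin θ ^ 2 * Real.cos θ ^ 2 / Sig a b r θ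

/-- `ρ = r² sinθ cosθ (= ½ r² sin 2θ)`. -/
def rho (r θ : ℝ) : ℝ := r ^ 2 * Real.sin θ * Real.cos θ

/-- `det σ = σ₁₁σ₂₂ − σ₁₂²`. -/
def detSig (a b r θ : ℝ) : ℝ :=
  sig11 a b r θ * sig22 a b r θ - sig12 a b r θ ^ 2

/-- The conformal factor `Φ₀ > 0`, defined by `Φ₀² = √(det σ)/ρ`. -/
def Phi0 (a b r θ : ℝ) : ℝ := Real.sqrt (Real.sqrt (detSig a b r θ) / rho r θ)

end MP
end

/-!
Expanding the determinant gives `det σ = sin²θ cos²θ · Q` with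
`Q = reducedDet a b r θ = AB + μ (a² sin²θ B + b² cos²θ A) / Σ`,
so that `(r Φ₀)⁴ = Q`.
The correction term of `Q` is nonnegative, and it is at most `μ²` because
`a² sin²θ B + b² cos²θ A ≤ μ Σ`. Finally `AB = abμ + r² (r² + μ)`.
-/

namespace MP

open Real

noncomputable def reducedDet (a b r θ : ℝ) : ℝ :=
  Afun a b r * Bfun a b r +
    (a + b) ^ 2 * (a ^ 2 * sin θ ^ 2 * Bfun a b r + b ^ 2 * cos θ ^ 2 * Afun a b r) /
      Sig a b r θ

variable {a b r θ : ℝ}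

theorem detSig_eq_mul_reducedDet :
    detSig a b r θ = (sin θ * cos θ) ^ 2 * reducedDet a b r θ := by
  unfold detSig sig11 sig22 sig12 reducedDet
  rcases eq_or_ne (Sig a b r θ) 0 with h | h
  · simp only [h, div_zero]
    ring
  · field_simp
    ring

theorem mul_le_Afun_mul_Bfun : a * b * (a + b) ^ 2 ≤ Afun a b r * Bfun a b r := by
  have h : Afun a b r * Bfun a b r = a * b * (a + b) ^ 2 + r ^ 2 * (r ^ 2 + (a + b) ^ 2) := by
    unfold Afun Bfun
    ring
  rw [h]
  have : 0 ≤ r ^ 2 * (r ^ 2 + (a + b) ^ 2) := by positivity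
  linarith

theorem Sig_nonneg (hab : 0 ≤ a * b) : 0 ≤ Sig a b r θ := by
  unfold Sig
  positivity

theorem Afun_nonneg (hab : 0 ≤ a * b) : 0 ≤ Afun a b r := by
  unfold Afun
  positivity

theorem Bfun_nonneg (hab : 0 ≤ a * b) : 0 ≤ Bfun a b r := by
  unfold Bfun
  positivity

theorem Afun_mul_Bfun_le_reducedDet (hab : 0 ≤ a * b) :
    Afun a b r * Bfun a b r ≤ reducedDet a b r θ := by
  have := Afun_nonneg (r := r) hab
  have := Bfun_nonneg (r := r) hab
  have := Sig_nonneg (r := r) (θ := θ) hab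
  unfold reducedDet
  have : 0 ≤ (a + b) ^ 2 * (a ^ 2 * sin θ ^ 2 * Bfun a b r + b ^ 2 * cos θ ^ 2 * Afun a b r) /
      Sig a b r θ := by positivity
  linarith

theorem sin_sq_mul_Bfun_add_cos_sq_mul_Afun_le (hab : 0 ≤ a * b) :
    a ^ 2 * sin θ ^ 2 * Bfun a b r + b ^ 2 * cos θ ^ 2 * Afun a b r ≤
      (a + b) ^ 2 * Sig a b r θ := by
  have hsc := sin_sq_add_cos_sq θ
  have hr : 0 ≤ r ^ 2 + a * b := by positivity
  have hs : 0 ≤ sin θ ^ 2 := sq_nonneg _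
  have hc : 0 ≤ cos θ ^ 2 := sq_nonneg _
  have ha' : 0 ≤ a ^ 2 + 2 * (a * b) := by positivity
  have hb' : 0 ≤ b ^ 2 + 2 * (a * b) := by positivity
  unfold Afun Bfun Sig
  linear_combination (r ^ 2 + a * b) * (a + b) ^ 2 * hsc
    + mul_nonneg hr (add_nonneg (mul_nonneg hs hb') (mul_nonneg hc ha'))
    + mul_nonneg (mul_nonneg hc (sq_nonneg a)) ha'
    + mul_nonneg (mul_nonneg hs (sq_nonneg b)) hb'

theorem reducedDet_le (hab : 0 ≤ a * b) :
    reducedDet a b r θ ≤ Afun a b r * Bfun a b r + ((a + b) ^ 2) ^ 2 := by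
  unfold reducedDet
  gcongr
  refine div_le_of_le_mul₀ (Sig_nonneg hab) (by positivity) ?_
  calc (a + b) ^ 2 * (a ^ 2 * sin θ ^ 2 * Bfun a b r + b ^ 2 * cos θ ^ 2 * Afun a b r)
      ≤ (a + b) ^ 2 * ((a + b) ^ 2 * Sig a b r θ) := by
        gcongr
        exact sin_sq_mul_Bfun_add_cos_sq_mul_Afun_le hab
    _ = ((a + b) ^ 2) ^ 2 * Sig a b r θ := by ring

theorem mul_Phi0_eq_rpow (hr : 0 < r) (hsc : 0 < sin θ * cos θ) (hQ : 0 ≤ reducedDet a b r θ) :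
    r * Phi0 a b r θ = reducedDet a b r θ ^ ((1 : ℝ) / 4) := by
  have hsqrt : √(detSig a b r θ) = sin θ * cos θ * √(reducedDet a b r θ) := by
    rw [detSig_eq_mul_reducedDet, sqrt_mul (sq_nonneg _), sqrt_sq hsc.le]
  have hquot : √(detSig a b r θ) / rho r θ = √(reducedDet a b r θ) / r ^ 2 := by
    unfold rho
    rw [hsqrt, show r ^ 2 * sin θ * cos θ = sin θ * cos θ * r ^ 2 by ring,
      mul_div_mul_left _ _ hsc.ne']
  unfold Phi0
  rw [hquot, sqrt_div' _ (sq_nonneg r), sqrt_sq hr.le, mul_div_cancel₀ _ hr.ne',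
    sqrt_eq_rpow, sqrt_eq_rpow, ← rpow_mul hQ]
  norm_num

end MP

open MP in
/-- Bounds on the conformal factor of the extreme Myers–Perry slice (`μ = (a+b)²`):
`(abμ)^{1/4} ≤ ((r²+ab+a²)(r²+ab+b²))^{1/4} ≤ rΦ₀ ≤ ((r²+ab+a²)(r²+ab+b²) + μ²)^{1/4}`. -/
theorem Phi0_bounds (a b : ℝ) (ha : 0 < a) (hb : 0 < b)
    (r θ : ℝ) (hr : 0 < r) (hθ : θ ∈ Set.Ioo 0 (Real.pi / 2)) :
    (a * b * (a + b) ^ 2) ^ ((1 : ℝ) / 4) ≤ (Afun a b r * Bfun a b r) ^ ((1 : ℝ) / 4) ∧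
    (Afun a b r * Bfun a b r) ^ ((1 : ℝ) / 4) ≤ r * Phi0 a b r θ ∧
    r * Phi0 a b r θ ≤
      (Afun a b r * Bfun a b r + ((a + b) ^ 2) ^ 2) ^ ((1 : ℝ) / 4) := by
  have hab : 0 ≤ a * b := by positivity
  have hsc : 0 < Real.sin θ * Real.cos θ :=
    mul_pos (Real.sin_pos_of_mem_Ioo ⟨hθ.1, by linarith [hθ.2, Real.pi_pos]⟩)
      (Real.cos_pos_of_mem_Ioo ⟨by linarith [hθ.1, Real.pi_pos], hθ.2⟩)
  have hAB : 0 ≤ Afun a b r * Bfun a b r := mul_nonneg (Afun_nonneg hab) (Bfun_nonneg hab)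
  have hlow : Afun a b r * Bfun a b r ≤ reducedDet a b r θ := Afun_mul_Bfun_le_reducedDet hab
  rw [mul_Phi0_eq_rpow hr hsc (hAB.trans hlow)]
  exact ⟨Real.rpow_le_rpow (by positivity) mul_le_Afun_mul_Bfun (by norm_num),
    Real.rpow_le_rpow hAB hlow (by norm_num),
    Real.rpow_le_rpow (hAB.trans hlow) (reducedDet_le hab) (by norm_num)⟩
end

section
/- With the notation of the extreme Myers–Perry slice data, define for r > 0 the area function A(r) = 4π² ∫₀^{π/2} √( Σ(r,θ)·(σ₁₁σ₂₂ − σ₁₂²)(r,θ) ) dθ (the area of the constant-r cross-section of the slice). Then lim_{r→0⁺} A(r) = 2π² μ √(ab), the horizon area of the extreme Myers–Perry black hole. -/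
noncomputable section

namespace MP

def Ffun (a b r θ : ℝ) : ℝ :=
  (a + b) ^ 2 * (a ^ 2 * Real.sin θ ^ 2 * Bfun a b r + b ^ 2 * Real.cos θ ^ 2 * Afun a b r)
    + Afun a b r * Bfun a b r * Sig a b r θ

lemma Sig_pos (a b r θ : ℝ) (ha : 0 < a) (hb : 0 < b) : 0 < Sig a b r θ := by
  have := mul_pos ha hb
  unfold Sig; positivity

lemma key (a b r θ : ℝ) (ha : 0 < a) (hb : 0 < b) :
    Sig a b r θ * detSig a b r θ = (Real.sin θ * Real.cos θ) ^ 2 * Ffun a b r θ := by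
  have hS := (Sig_pos a b r θ ha hb).ne'
  unfold detSig sig11 sig22 sig12 Ffun
  field_simp
  ring

lemma Ffun_nonneg (a b r θ : ℝ) (ha : 0 < a) (hb : 0 < b) : 0 ≤ Ffun a b r θ := by
  have := mul_pos ha hb
  unfold Ffun Afun Bfun Sig; positivity

lemma Ffun_zero (a b θ : ℝ) : Ffun a b 0 θ = a * b * (a + b) ^ 4 := by
  unfold Ffun Afun Bfun Sig
  linear_combination (a * b * (a + b) ^ 2 * (a ^ 2 + a * b + b ^ 2)) *
    Real.sin_sq_add_cos_sq θ

lemma Ffun_continuous (a b : ℝ) :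
    Continuous (fun p : ℝ × ℝ => Ffun a b p.1 p.2) := by
  unfold Ffun Afun Bfun Sig; fun_prop

end MP



open MP intervalIntegral in
/-- The area of the constant-`r` cross-section of the extreme Myers–Perry slice,
`A(r) = 4π² ∫₀^{π/2} √(Σ (σ₁₁σ₂₂ − σ₁₂²)) dθ`, tends to the horizon area
`2π²μ√(ab)` (with `μ = (a+b)²`) as `r → 0⁺`. -/
theorem area_tendsto_horizon_area (a b : ℝ) (ha : 0 < a) (hb : 0 < b) :
    Filter.Tendsto
      (fun r : ℝ =>
        4 * Real.pi ^ 2 *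
          ∫ θ in (0 : ℝ)..(Real.pi / 2),
            Real.sqrt (Sig a b r θ * detSig a b r θ))
      (nhdsWithin 0 (Set.Ioi 0))
      (nhds (2 * Real.pi ^ 2 * (a + b) ^ 2 * Real.sqrt (a * b))) := by
  set g : ℝ → ℝ := fun r =>
    ∫ θ in (0:ℝ)..(Real.pi/2), Real.sin θ * Real.cos θ * Real.sqrt (Ffun a b r θ) with hg
  -- pointwise rewrite of the integral
  have hrw : ∀ r : ℝ,
      (∫ θ in (0:ℝ)..(Real.pi/2), Real.sqrt (Sig a b r θ * detSig a b r θ)) = g r := by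
    intro r
    apply intervalIntegral.integral_congr
    intro θ hθ
    rw [Set.uIcc_of_le (by positivity)] at hθ
    have hs : 0 ≤ Real.sin θ :=
      Real.sin_nonneg_of_nonneg_of_le_pi hθ.1 (hθ.2.trans (by linarith [Real.pi_pos]))
    have hc : 0 ≤ Real.cos θ :=
      Real.cos_nonneg_of_mem_Icc ⟨by linarith [hθ.1, Real.pi_pos], hθ.2⟩
    simp only []
    rw [key a b r θ ha hb, Real.sqrt_mul (sq_nonneg _),
      Real.sqrt_sq (by positivity)]
  -- continuity of g
  have hgc : Continuous g := by
    apply intervalIntegral.continuous_parametric_intervalIntegral_of_continuous'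
    have : Continuous fun p : ℝ × ℝ => Real.sqrt (Ffun a b p.1 p.2) :=
      Real.continuous_sqrt.comp (Ffun_continuous a b)
    fun_prop
  -- value of g at 0
  have hg0 : g 0 = (a + b) ^ 2 * Real.sqrt (a * b) / 2 := by
    have h1 : ∀ θ : ℝ, Real.sin θ * Real.cos θ * Real.sqrt (Ffun a b 0 θ)
        = ((a + b) ^ 2 * Real.sqrt (a * b)) * (Real.sin θ * Real.cos θ) := by
      intro θ
      rw [Ffun_zero, show (a + b) ^ 4 = ((a + b) ^ 2) ^ 2 by ring,
        Real.sqrt_mul (by positivity), Real.sqrt_sq (by positivity)]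
      ring
    rw [hg]
    simp only [h1]
    rw [intervalIntegral.integral_const_mul, integral_sin_mul_cos₁]
    simp [Real.sin_pi_div_two]
    ring
  simp only [hrw]
  have : Filter.Tendsto (fun r => 4 * Real.pi ^ 2 * g r) (nhdsWithin 0 (Set.Ioi 0))
      (nhds (4 * Real.pi ^ 2 * g 0)) :=
    ((hgc.tendsto 0).const_mul _).mono_left nhdsWithin_le_nhds
  convert this using 2
  rw [hg0]; ring

end
end
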